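/- Let ABC be a triangle with all angles less than 120°, F its Fermat point (where all three angles ∠AFB, ∠BFC, ∠CFA equal 120°), and Z a closed disk containing F. Then F maximizes the minimum of the three angles min(∠AQB, ∠BQC, ∠CQA) over all points Q in Z; in fact over all points Q in the plane, min(∠AQB, ∠BQC, ∠CQA) ≤ 120° with equality iff Q = F. -/

import Mathlib

open EuclideanGeometry Real

abbrev Pt := EuclideanSpace ℝ (Fin 2)

/-!
Write `u v = v / ‖v‖`. For any `x y z`, expanding `‖u x + u y + u z‖²` gives at most
`3 + 2 (cos ∠(x,y) + cos ∠(y,z) + cos ∠(z,x))`, which is negative if all three angles exceed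
`2π/3` (cosine below `-1/2`). Hence the minimum of the three angles at `Q` is at most `2π/3`, and
equality forces the unit vectors from `Q` towards `A`, `B`, `C` to sum to zero, as they do at `F`.
That sum is minus the gradient of `Q ↦ QA + QB + QC`, and the gradient of the norm is monotone:
`⟪u x - u y, x - y⟫ = (‖x‖ + ‖y‖)(1 - cos ∠(x,y)) ≥ 0`. Comparing two critical points `Q ≠ F`
therefore makes every term vanish, i.e. each vertex sees `Q` and `F` in the same direction, so
`A`, `B`, `C` all lie on the line `QF`.
-/

open NormedSpace

lemma Real.cos_two_pi_div_three : cos (2 * π / 3) = -(1 / 2) := by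
  rw [show 2 * π / 3 = π - π / 3 by ring, cos_pi_sub, cos_pi_div_three]

namespace InnerProductGeometry

variable {V : Type*} [NormedAddCommGroup V] [InnerProductSpace ℝ V]

lemma inner_normalize_normalize (x y : V) :
    inner ℝ (normalize x) (normalize y) = cos (angle x y) := by
  rw [cos_angle, NormedSpace.normalize, NormedSpace.normalize, real_inner_smul_left,
    real_inner_smul_right, div_eq_mul_inv, mul_inv]
  ring

lemma inner_normalize_left (x y : V) : inner ℝ (normalize x) y = ‖y‖ * cos (angle x y) := by
  conv_lhs => rw [← norm_smul_normalize y]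
  rw [real_inner_smul_right, inner_normalize_normalize]

lemma norm_normalize_add_normalize_add_normalize_sq_le (x y z : V) :
    ‖normalize x + normalize y + normalize z‖ ^ 2 ≤
      3 + 2 * (cos (angle x y) + cos (angle y z) + cos (angle z x)) := by
  rw [← real_inner_self_eq_norm_sq]
  simp only [inner_add_left, inner_add_right, inner_normalize_normalize]
  rw [angle_comm y x, angle_comm z y, angle_comm x z]
  -- `cos (angle v v)` is `1`, or `0` when `v = 0`
  linarith [cos_le_one (angle x x), cos_le_one (angle y y), cos_le_one (angle z z)]

lemma min_angle_le_two_pi_div_three (x y z : V) :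
    min (angle x y) (min (angle y z) (angle z x)) ≤ 2 * π / 3 := by
  by_contra! h
  have hcos : ∀ v w : V, 2 * π / 3 < angle v w → cos (angle v w) < -(1 / 2) := fun v w hvw => by
    rw [← cos_two_pi_div_three]
    exact cos_lt_cos_of_nonneg_of_le_pi (by positivity) (angle_le_pi v w) hvw
  simp only [lt_min_iff] at h
  nlinarith [norm_normalize_add_normalize_add_normalize_sq_le x y z, hcos x y h.1, hcos y z h.2.1,
    hcos z x h.2.2]

lemma normalize_add_normalize_add_normalize_eq_zero {x y z : V}
    (h : 2 * π / 3 ≤ min (angle x y) (min (angle y z) (angle z x))) :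
    normalize x + normalize y + normalize z = 0 := by
  have hcos : ∀ v w : V, 2 * π / 3 ≤ angle v w → cos (angle v w) ≤ -(1 / 2) := fun v w hvw => by
    rw [← cos_two_pi_div_three]
    exact cos_le_cos_of_nonneg_of_le_pi (by positivity) (angle_le_pi v w) hvw
  simp only [le_min_iff] at h
  rw [← norm_eq_zero, ← pow_eq_zero_iff two_ne_zero]
  refine le_antisymm ?_ (sq_nonneg _)
  linarith [norm_normalize_add_normalize_add_normalize_sq_le x y z, hcos x y h.1, hcos y z h.2.1,
    hcos z x h.2.2]

lemma inner_normalize_sub_normalize_sub (x y : V) :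
    inner ℝ (normalize x - normalize y) (x - y) = (‖x‖ + ‖y‖) * (1 - cos (angle x y)) := by
  have hself : ∀ v : V, inner ℝ (normalize v) v = ‖v‖ := fun v => by
    rw [NormedSpace.normalize, real_inner_smul_left, real_inner_self_eq_norm_sq, sq, ← mul_assoc,
      inv_mul_mul_self]
  rw [inner_sub_left, inner_sub_right, inner_sub_right, hself, hself, inner_normalize_left,
    inner_normalize_left, angle_comm y x]
  ring

lemma inner_normalize_sub_normalize_sub_nonneg (x y : V) :
    0 ≤ inner ℝ (normalize x - normalize y) (x - y) := by
  rw [inner_normalize_sub_normalize_sub]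
  exact mul_nonneg (by positivity) (sub_nonneg.2 (cos_le_one _))

lemma angle_eq_zero_of_inner_normalize_sub_normalize_sub_eq_zero {x y : V} (hxy : x ≠ y)
    (h : inner ℝ (normalize x - normalize y) (x - y) = 0) : angle x y = 0 := by
  have hpos : 0 < ‖x‖ + ‖y‖ := by
    by_contra! hle
    have hx : x = 0 := norm_le_zero_iff.1 (by linarith [norm_nonneg y])
    have hy : y = 0 := norm_le_zero_iff.1 (by linarith [norm_nonneg x])
    exact hxy (hx.trans hy.symm)
  rw [inner_normalize_sub_normalize_sub, mul_eq_zero, sub_eq_zero] at h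
  exact cos_eq_one_iff_angle_eq_zero.1 (h.resolve_left hpos.ne').symm

end InnerProductGeometry

namespace EuclideanGeometry

variable {V P : Type*} [NormedAddCommGroup V] [InnerProductSpace ℝ V] [MetricSpace P]
  [NormedAddTorsor V P]

noncomputable def unitVectorSum (A B C Q : P) : V :=
  normalize (A -ᵥ Q) + normalize (B -ᵥ Q) + normalize (C -ᵥ Q)

lemma min_angle_le_two_pi_div_three (A B C Q : P) :
    min (∠ A Q B) (min (∠ B Q C) (∠ C Q A)) ≤ 2 * π / 3 :=
  InnerProductGeometry.min_angle_le_two_pi_div_three _ _ _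

lemma unitVectorSum_eq_zero_of_two_pi_div_three_le {A B C Q : P}
    (h : 2 * π / 3 ≤ min (∠ A Q B) (min (∠ B Q C) (∠ C Q A))) : unitVectorSum A B C Q = 0 :=
  InnerProductGeometry.normalize_add_normalize_add_normalize_eq_zero h

lemma mem_affineSpan_pair_of_inner_normalize_sub_normalize_sub_eq_zero {X Q F : P} (hQF : Q ≠ F)
    (h : inner ℝ (normalize (X -ᵥ Q) - normalize (X -ᵥ F)) ((X -ᵥ Q) - (X -ᵥ F)) = 0) :
    X ∈ line[ℝ, Q, F] := by
  have hangle := InnerProductGeometry.angle_eq_zero_of_inner_normalize_sub_normalize_sub_eq_zero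
    (by simpa using hQF) h
  rw [← neg_vsub_eq_vsub_rev Q X, ← neg_vsub_eq_vsub_rev F X,
    InnerProductGeometry.angle_neg_neg] at hangle
  exact (collinear_of_angle_eq_zero hangle).mem_affineSpan_of_mem_of_ne (by simp) (by simp)
    (by simp) hQF

lemma eq_of_unitVectorSum_eq_zero {A B C Q F : P} (hABC : ¬ Collinear ℝ {A, B, C})
    (hQ : unitVectorSum A B C Q = 0) (hF : unitVectorSum A B C F = 0) : Q = F := by
  by_contra hQF
  let d (X : P) : ℝ :=
    inner ℝ (normalize (X -ᵥ Q) - normalize (X -ᵥ F)) ((X -ᵥ Q) - (X -ᵥ F))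
  have hd_nonneg (X : P) : 0 ≤ d X :=
    InnerProductGeometry.inner_normalize_sub_normalize_sub_nonneg _ _
  have hdiff : normalize (A -ᵥ Q) - normalize (A -ᵥ F) + (normalize (B -ᵥ Q) - normalize (B -ᵥ F))
      + (normalize (C -ᵥ Q) - normalize (C -ᵥ F))
      = unitVectorSum A B C Q - unitVectorSum A B C F := by
    simp only [unitVectorSum]
    abel
  have hd_sum : d A + d B + d C = 0 := by
    simp only [d, vsub_sub_vsub_cancel_left, ← inner_add_left]
    rw [hdiff, hQ, hF, sub_zero, inner_zero_left]
  have hline (X : P) (hX : d X = 0) : X ∈ line[ℝ, Q, F] :=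
    mem_affineSpan_pair_of_inner_normalize_sub_normalize_sub_eq_zero hQF hX
  refine hABC ((collinear_insert_insert_insert_of_mem_affineSpan_pair
    (hline A ?_) (hline B ?_) (hline C ?_)).subset (by simp [Set.insert_subset_iff])) <;>
  linarith [hd_nonneg A, hd_nonneg B, hd_nonneg C]

end EuclideanGeometry

theorem stmt7_general (A B C F P : Pt) (r : ℝ)
    (hncol : ¬ Collinear ℝ ({A, B, C} : Set Pt))
    (hF1 : ∠ A F B = 2 * π / 3) (hF2 : ∠ B F C = 2 * π / 3)
    (hF3 : ∠ C F A = 2 * π / 3) :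
    (∀ Q ∈ Metric.closedBall P r, Q ≠ A → Q ≠ B → Q ≠ C →
      min (∠ A Q B) (min (∠ B Q C) (∠ C Q A)) ≤
        min (∠ A F B) (min (∠ B F C) (∠ C F A))) ∧
    (∀ Q : Pt, Q ≠ A → Q ≠ B → Q ≠ C →
      min (∠ A Q B) (min (∠ B Q C) (∠ C Q A)) ≤ 2 * π / 3 ∧
      (min (∠ A Q B) (min (∠ B Q C) (∠ C Q A)) = 2 * π / 3 ↔ Q = F)) := by
  have hF : min (∠ A F B) (min (∠ B F C) (∠ C F A)) = 2 * π / 3 := by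
    rw [hF1, hF2, hF3, min_self, min_self]
  have hFsum := unitVectorSum_eq_zero_of_two_pi_div_three_le hF.ge
  have hmin (Q : Pt) : min (∠ A Q B) (min (∠ B Q C) (∠ C Q A)) ≤ 2 * π / 3 ∧
      (min (∠ A Q B) (min (∠ B Q C) (∠ C Q A)) = 2 * π / 3 ↔ Q = F) :=
    ⟨min_angle_le_two_pi_div_three A B C Q, fun h => eq_of_unitVectorSum_eq_zero hncol
      (unitVectorSum_eq_zero_of_two_pi_div_three_le h.ge) hFsum, fun h => h ▸ hF⟩
  exact ⟨fun Q _ _ _ _ => hF ▸ (hmin Q).1, fun Q _ _ _ => hmin Q⟩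

/-- If all angles of triangle `ABC` are less than `120°`, `F` is the Fermat
point (all three angles at `F` equal `120°`), and `Z` is a closed disk
containing `F`, then `F` maximizes `Q ↦ min(∠AQB, ∠BQC, ∠CQA)` over `Z`;
in fact for every point `Q ∉ {A, B, C}` the minimum is at most `120°`,
with equality iff `Q = F`. -/
theorem stmt7 (A B C F P : Pt) (r : ℝ) (hr : 0 < r)
    (hncol : ¬ Collinear ℝ ({A, B, C} : Set Pt))
    (hA : ∠ B A C < 2 * π / 3) (hB : ∠ A B C < 2 * π / 3)
    (hC : ∠ B C A < 2 * π / 3)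
    (hF1 : ∠ A F B = 2 * π / 3) (hF2 : ∠ B F C = 2 * π / 3)
    (hF3 : ∠ C F A = 2 * π / 3)
    (hFZ : F ∈ Metric.closedBall P r) :
    (∀ Q ∈ Metric.closedBall P r, Q ≠ A → Q ≠ B → Q ≠ C →
      min (∠ A Q B) (min (∠ B Q C) (∠ C Q A)) ≤
        min (∠ A F B) (min (∠ B F C) (∠ C F A))) ∧
    (∀ Q : Pt, Q ≠ A → Q ≠ B → Q ≠ C →
      min (∠ A Q B) (min (∠ B Q C) (∠ C Q A)) ≤ 2 * π / 3 ∧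
      (min (∠ A Q B) (min (∠ B Q C) (∠ C Q A)) = 2 * π / 3 ↔ Q = F)) :=
  stmt7_general A B C F P r hncol hF1 hF2 hF3
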